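/- arXiv:2304.12673 — 4 statements merged into one kernel-verified Lean document; each statement's English description precedes it below -/
import Mathlib

section
/- For i.i.d. Bernoulli(p) trials with 0 < p < 1 and window size w ≥ 2, the expected waiting time for 2 successes within a window of w time steps is E(τ_{(w,2)}) = 1/p + 1/(p(1 - (1-p)^{w-1})). -/
open MeasureTheory ProbabilityTheory ENNReal
open scoped Classical

/-- The waiting time (valued in `ℝ≥0∞`, `∞` if it never happens) until some window of
`w` consecutive trials (window size possibly infinite) among the trials
`Z 0, Z 1, ...` contains at least `s` successes. -/
noncomputable def tauWin {Ω : Type*} (Z : ℕ → Ω → Bool) (w : ℕ∞) (s : ℕ) (ω : Ω) : ℝ≥0∞ :=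
  sInf ((fun t : ℕ => (t : ℝ≥0∞)) ''
    {t | s ≤ ((Finset.range t).filter
      (fun i : ℕ => (t : ℕ∞) ≤ (i : ℕ∞) + w ∧ Z i ω = true)).card})

/-!
`τ > t` exactly when the first `t` trials contain no two successes less than `w` apart, so
`E τ = ∑ₜ aₜ` where `aₜ` is the probability that a Bernoulli word of length `t` is spaced in
this sense. Conditioning on the first letter, with `q = 1 - p` and `k = w - 1`, gives the renewal
recurrence `aₜ₊₁ = q aₜ + p q^min(k,t) aₜ₋ₖ`: after a success the next `k` letters must be
failures. Summing it over `t < N` bounds the partial sums (since `q + p q^k < 1`), and in the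
limit `A = ∑ₜ aₜ` satisfies `A = 1 + q A + p (∑_{t<k} qᵗ + q^k A)`, i.e.
`A = (2 - q^k) / (p (1 - q^k))`.
-/

open Finset Filter Topology

lemma sInf_natCast_image_eq_tsum (S : Set ℕ) :
    sInf ((fun t : ℕ => (t : ℝ≥0∞)) '' S) = ∑' t : ℕ, {t | ∀ s ∈ S, t < s}.indicator 1 t := by
  rw [← _root_.tsum_subtype]
  simp only [Pi.one_apply]
  rw [ENNReal.tsum_set_one]
  rcases S.eq_empty_or_nonempty with rfl | hS
  · simp
  have hlower : {t | ∀ s ∈ S, t < s} = {t | t < sInf S} := Set.ext fun t =>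
    ⟨fun h => h _ (Nat.sInf_mem hS), fun h _ hs => h.trans_le (Nat.sInf_le hs)⟩
  rw [hlower, Set.Nat.encard_range, ENat.toENNReal_coe]
  exact le_antisymm (sInf_le ⟨_, Nat.sInf_mem hS, rfl⟩)
    (le_sInf (Set.forall_mem_image.2 fun s hs => Nat.cast_le.2 (Nat.sInf_le hs)))

section WindowRecurrence

variable {p : ℝ} {k : ℕ} {a : ℕ → ℝ}

lemma sum_range_add_window_term (ha0 : a 0 = 1) (N : ℕ) :
    ∑ t ∈ range (N + k), (1 - p) ^ min k t * a (t - k)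
      = ∑ t ∈ range k, (1 - p) ^ t + (1 - p) ^ k * ∑ t ∈ range N, a t := by
  rw [add_comm, sum_range_add, mul_sum]
  congr 1 <;> refine sum_congr rfl fun t ht => ?_
  · rw [min_eq_right (mem_range.1 ht).le, Nat.sub_eq_zero_of_le (mem_range.1 ht).le, ha0, mul_one]
  · rw [min_eq_left (by omega), Nat.add_sub_cancel_left]

lemma sum_range_succ_of_window_recurrence (ha0 : a 0 = 1)
    (hrec : ∀ t, a (t + 1) = (1 - p) * a t + p * ((1 - p) ^ min k t * a (t - k))) (N : ℕ) :
    ∑ t ∈ range (N + 1), a t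
      = 1 + (1 - p) * ∑ t ∈ range N, a t
        + p * ∑ t ∈ range N, (1 - p) ^ min k t * a (t - k) := by
  simp only [sum_range_succ', hrec, sum_add_distrib, ← mul_sum, ha0]
  ring

/-- `t - k` truncates at `0`: for `t < k` the last term of the recurrence is `p (1 - p)^t`. -/
theorem hasSum_of_window_recurrence (hp : 0 < p) (hp1 : p ≤ 1) (hk : 1 ≤ k) (ha0 : a 0 = 1)
    (ha : ∀ t, 0 ≤ a t)
    (hrec : ∀ t, a (t + 1) = (1 - p) * a t + p * ((1 - p) ^ min k t * a (t - k))) :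
    HasSum a ((2 - (1 - p) ^ k) / (p * (1 - (1 - p) ^ k))) := by
  have hq0 : 0 ≤ 1 - p := by linarith
  have hqk : (1 - p) ^ k < 1 := pow_lt_one₀ hq0 (by linarith) (by omega)
  have hG : p * ∑ t ∈ range k, (1 - p) ^ t = 1 - (1 - p) ^ k := by
    simpa only [_root_.sub_sub_cancel] using mul_neg_geom_sum (1 - p) k
  have hden : 0 < p * (1 - (1 - p) ^ k) := mul_pos hp (by linarith)
  have hmono : ∀ N, ∑ t ∈ range N, a t ≤ ∑ t ∈ range (N + 1), a t := fun N => by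
    simpa [sum_range_succ] using ha N
  have hbound : ∀ N, ∑ t ∈ range (N + 1), a t ≤ (2 - (1 - p) ^ k) / (p * (1 - (1 - p) ^ k)) := by
    intro N
    have hwin : ∑ t ∈ range N, (1 - p) ^ min k t * a (t - k)
        ≤ ∑ t ∈ range k, (1 - p) ^ t + (1 - p) ^ k * ∑ t ∈ range (N + 1), a t := by
      rw [← sum_range_add_window_term ha0]
      exact sum_le_sum_of_subset_of_nonneg (range_subset_range.2 (by omega))
        fun t _ _ => mul_nonneg (pow_nonneg hq0 _) (ha _)
    have := sum_range_succ_of_window_recurrence ha0 hrec N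
    rw [le_div_iff₀ hden]
    nlinarith [mul_le_mul_of_nonneg_left (hmono N) hq0, mul_le_mul_of_nonneg_left hwin hp.le]
  have hsum : Summable a :=
    summable_of_sum_range_le ha fun N => (hmono N).trans (hbound N)
  have hS := hsum.hasSum.tendsto_sum_nat
  have hlim : Tendsto (fun N => ∑ t ∈ range (N + k + 1), a t) atTop
      (𝓝 (1 + (1 - p) * ∑' t, a t
        + p * (∑ t ∈ range k, (1 - p) ^ t + (1 - p) ^ k * ∑' t, a t))) := by
    simp only [sum_range_succ_of_window_recurrence ha0 hrec, sum_range_add_window_term ha0]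
    exact (tendsto_const_nhds.add (((tendsto_add_atTop_iff_nat k).2 hS).const_mul _)).add
      ((tendsto_const_nhds.add (hS.const_mul _)).const_mul _)
  have hfix := tendsto_nhds_unique ((tendsto_add_atTop_iff_nat (k + 1)).2 hS) hlim
  convert hsum.hasSum using 1
  rw [div_eq_iff hden.ne']
  linear_combination -hG - hfix

end WindowRecurrence

section Words

def bernoulliWeight (p : ℝ) (b : Bool) : ℝ := if b then p else 1 - p

noncomputable def wordWeight (p : ℝ) {t : ℕ} (f : Fin t → Bool) : ℝ :=
  ∏ i, bernoulliWeight p (f i)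

lemma bernoulliWeight_nonneg {p : ℝ} (hp : 0 ≤ p) (hp1 : p ≤ 1) (b : Bool) :
    0 ≤ bernoulliWeight p b := by
  unfold bernoulliWeight; split <;> linarith

lemma wordWeight_nonneg {p : ℝ} (hp : 0 ≤ p) (hp1 : p ≤ 1) {t : ℕ} (f : Fin t → Bool) :
    0 ≤ wordWeight p f :=
  prod_nonneg fun i _ => bernoulliWeight_nonneg hp hp1 (f i)

lemma sum_filter_wordWeight_succ (p : ℝ) {t : ℕ} (P : (Fin (t + 1) → Bool) → Prop)
    [DecidablePred P] :
    ∑ f with P f, wordWeight p f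
      = (1 - p) * ∑ g with P (Fin.cons false g), wordWeight p g
        + p * ∑ g with P (Fin.cons true g), wordWeight p g := by
  rw [sum_filter, ← (Fin.consEquiv fun _ => Bool).sum_comp, Fintype.sum_prod_type,
    Fintype.sum_bool, add_comm]
  simp [Fin.consEquiv, wordWeight, Fin.prod_univ_succ, sum_filter, mul_sum, bernoulliWeight]

def IsSpaced (w : ℕ) {t : ℕ} (f : Fin t → Bool) : Prop :=
  ∀ i j : Fin t, i < j → (j : ℕ) < i + w → f i = true → f j = false

lemma isSpaced_cons {w t : ℕ} (b : Bool) (g : Fin t → Bool) :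
    IsSpaced w (Fin.cons b g : Fin (t + 1) → Bool)
      ↔ IsSpaced w g ∧ (b = true → ∀ j : Fin t, (j : ℕ) < w - 1 → g j = false) := by
  simp only [IsSpaced, Fin.forall_fin_succ, Fin.cons_zero, Fin.cons_succ, Fin.succ_lt_succ_iff,
    Fin.val_succ, Fin.val_zero, Fin.succ_pos, Fin.not_lt_zero, false_implies, true_implies,
    true_and, zero_add, Nat.lt_sub_iff_add_lt]
  constructor
  · rintro ⟨hb, hg⟩
    exact ⟨fun i j hij hji => hg i j hij (by omega), fun hbt j hj => hb j hj hbt⟩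
  · rintro ⟨hg, hb⟩
    exact ⟨fun j hj hbt => hb hbt j hj, fun i j hij hji => hg i j hij (by omega)⟩

noncomputable def spacedMass (p : ℝ) (w t : ℕ) : ℝ :=
  ∑ f : Fin t → Bool with IsSpaced w f, wordWeight p f

lemma spacedMass_zero (p : ℝ) (w : ℕ) : spacedMass p w 0 = 1 := by
  simp [spacedMass, wordWeight, IsSpaced]

lemma spacedMass_nonneg {p : ℝ} (hp : 0 ≤ p) (hp1 : p ≤ 1) (w t : ℕ) : 0 ≤ spacedMass p w t :=
  sum_nonneg fun f _ => wordWeight_nonneg hp hp1 f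

lemma sum_isSpaced_prefix_false (p : ℝ) (w : ℕ) : ∀ t k : ℕ,
    ∑ f : Fin t → Bool with IsSpaced w f ∧ ∀ j : Fin t, (j : ℕ) < k → f j = false, wordWeight p f
      = (1 - p) ^ min k t * spacedMass p w (t - k)
  | 0, k => by simp [spacedMass_zero, wordWeight, IsSpaced]
  | t + 1, 0 => by simp [spacedMass]
  | t + 1, k + 1 => by
    rw [sum_filter_wordWeight_succ]
    simp only [isSpaced_cons, Fin.forall_fin_succ, Fin.cons_zero, Fin.cons_succ, Fin.val_zero,
      Fin.val_succ, Nat.zero_lt_succ, add_lt_add_iff_right, Bool.false_eq_true, Bool.true_eq_false,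
      false_implies, forall_const, true_and, false_and, and_true, and_false, filter_false,
      sum_empty, mul_zero, add_zero, Nat.add_min_add_right, Nat.add_sub_add_right]
    rw [sum_isSpaced_prefix_false p w t k]
    ring

lemma spacedMass_succ (p : ℝ) (w t : ℕ) :
    spacedMass p w (t + 1)
      = (1 - p) * spacedMass p w t
        + p * ((1 - p) ^ min (w - 1) t * spacedMass p w (t - (w - 1))) := by
  rw [spacedMass, sum_filter_wordWeight_succ, ← sum_isSpaced_prefix_false]
  simp only [isSpaced_cons, Bool.false_eq_true, false_implies, and_true, true_implies]
  rfl

end Words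

lemma forall_window_lt_iff_isSpaced (x : ℕ → Bool) (w t : ℕ) :
    (∀ s ∈ {s : ℕ | 2 ≤ ((range s).filter
        fun i : ℕ => (s : ℕ∞) ≤ (i : ℕ∞) + (w : ℕ∞) ∧ x i = true).card}, t < s)
      ↔ IsSpaced w fun i : Fin t => x i := by
  constructor
  · intro h i j hij hji hi
    by_contra hj
    simp only [Bool.not_eq_false] at hj
    have := h (j + 1) <| Finset.one_lt_card.2 ⟨i, ?_, j, ?_, (Fin.val_fin_lt.2 hij).ne⟩
    · omega
    all_goals simp only [mem_filter, mem_range, ← Nat.cast_add, Nat.cast_le]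
    exacts [⟨by omega, by omega, hi⟩, ⟨by omega, by omega, hj⟩]
  · intro h s hs
    obtain ⟨a, ha, b, hb, hab⟩ := Finset.one_lt_card.1 hs
    simp only [mem_filter, mem_range, ← Nat.cast_add, Nat.cast_le] at ha hb
    by_contra! hst
    rcases Nat.lt_or_gt_of_ne hab with hlt | hlt
    · exact absurd hb.2.2 (by simpa using h ⟨a, by omega⟩ ⟨b, by omega⟩ hlt (by simp; omega) ha.2.2)
    · exact absurd ha.2.2 (by simpa using h ⟨b, by omega⟩ ⟨a, by omega⟩ hlt (by simp; omega) hb.2.2)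

lemma tauWin_two_eq_tsum {Ω : Type*} (Z : ℕ → Ω → Bool) (w : ℕ) (ω : Ω) :
    tauWin Z w 2 ω = ∑' t : ℕ, {ω | IsSpaced w fun i : Fin t => Z i ω}.indicator 1 ω := by
  rw [tauWin, sInf_natCast_image_eq_tsum]
  refine tsum_congr fun t => ?_
  simp only [Set.indicator_apply]
  exact if_congr (forall_window_lt_iff_isSpaced (Z · ω) w t) rfl rfl

section Trials

variable {Ω : Type*} [MeasurableSpace Ω] {μ : Measure Ω} {Z : ℕ → Ω → Bool}

lemma measurableSet_isSpaced (hmeas : ∀ i, Measurable (Z i)) (w t : ℕ) :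
    MeasurableSet {ω | IsSpaced w fun i : Fin t => Z i ω} :=
  measurable_pi_lambda (fun ω (i : Fin t) => Z i ω) (fun i => hmeas i)
    (MeasurableSet.of_discrete (s := {f : Fin t → Bool | IsSpaced w f}))

lemma lintegral_tauWin_two (hmeas : ∀ i, Measurable (Z i)) (w : ℕ) :
    ∫⁻ ω, tauWin Z w 2 ω ∂μ = ∑' t : ℕ, μ {ω | IsSpaced w fun i : Fin t => Z i ω} := by
  simp_rw [tauWin_two_eq_tsum]
  rw [lintegral_tsum fun t =>
    (measurable_one.indicator (measurableSet_isSpaced hmeas w t)).aemeasurable]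
  simp only [lintegral_indicator_one (measurableSet_isSpaced hmeas _ _)]

variable [IsProbabilityMeasure μ] {p : ℝ}

lemma measure_preimage_eq_bernoulliWeight (hp : 0 ≤ p) (hmeas : ∀ i, Measurable (Z i))
    (hbern : ∀ i, μ {ω | Z i ω = true} = ENNReal.ofReal p) (i : ℕ) (b : Bool) :
    μ (Z i ⁻¹' {b}) = ENNReal.ofReal (bernoulliWeight p b) := by
  cases b
  · have hcompl : Z i ⁻¹' {false} = {ω | Z i ω = true}ᶜ := by ext; simp
    have htrue : MeasurableSet {ω | Z i ω = true} := hmeas i (measurableSet_singleton true)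
    rw [hcompl, prob_compl_eq_one_sub htrue, hbern, bernoulliWeight, if_neg Bool.false_ne_true,
      ENNReal.ofReal_sub _ hp, ENNReal.ofReal_one]
  · exact hbern i

lemma measure_word_eq (hp : 0 ≤ p) (hp1 : p ≤ 1) (hmeas : ∀ i, Measurable (Z i))
    (hindep : iIndepFun Z μ) (hbern : ∀ i, μ {ω | Z i ω = true} = ENNReal.ofReal p)
    {t : ℕ} (f : Fin t → Bool) :
    μ {ω | (fun i : Fin t => Z i ω) = f} = ENNReal.ofReal (wordWeight p f) := by
  have hcyl : {ω | (fun i : Fin t => Z i ω) = f} = ⋂ i : Fin t, Z i ⁻¹' {f i} := by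
    ext; simp [funext_iff]
  rw [hcyl, (hindep.precomp Fin.val_injective).meas_iInter
      fun i => ⟨{f i}, measurableSet_singleton _, rfl⟩,
    wordWeight, ENNReal.ofReal_prod_of_nonneg fun i _ => bernoulliWeight_nonneg hp hp1 _]
  exact prod_congr rfl fun i _ => measure_preimage_eq_bernoulliWeight hp hmeas hbern i (f i)

lemma measure_isSpaced (hp : 0 ≤ p) (hp1 : p ≤ 1) (hmeas : ∀ i, Measurable (Z i))
    (hindep : iIndepFun Z μ) (hbern : ∀ i, μ {ω | Z i ω = true} = ENNReal.ofReal p) (w t : ℕ) :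
    μ {ω | IsSpaced w fun i : Fin t => Z i ω} = ENNReal.ofReal (spacedMass p w t) := by
  have hX : Measurable fun ω (i : Fin t) => Z i ω := measurable_pi_lambda _ fun i => hmeas i
  have hpre : {ω | IsSpaced w fun i : Fin t => Z i ω}
      = (fun ω (i : Fin t) => Z i ω) ⁻¹' ↑({f | IsSpaced w f} : Finset (Fin t → Bool)) := by
    ext; simp
  rw [hpre, ← sum_measure_preimage_singleton _ fun f _ => hX (measurableSet_singleton f),
    spacedMass, ENNReal.ofReal_sum_of_nonneg fun f _ => wordWeight_nonneg hp hp1 f]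
  exact sum_congr rfl fun f _ => measure_word_eq hp hp1 hmeas hindep hbern f

end Trials

/-- The expected waiting time for 2 successes within a window of `w` time steps, for
i.i.d. Bernoulli(p) trials with `0 < p < 1` and `w ≥ 2`:
`E(τ_{(w,2)}) = 1/p + 1/(p(1-(1-p)^{w-1}))`. -/
theorem stmt_6 {Ω : Type*} [MeasurableSpace Ω] (μ : Measure Ω) [IsProbabilityMeasure μ]
    (p : ℝ) (hp : 0 < p) (hp1 : p < 1)
    (Z : ℕ → Ω → Bool)
    (hmeas : ∀ i, Measurable (Z i))
    (hindep : iIndepFun Z μ)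
    (hbern : ∀ i, μ {ω | Z i ω = true} = ENNReal.ofReal p)
    (w : ℕ) (hw : 2 ≤ w) :
    ∫⁻ ω, tauWin Z (w : ℕ∞) 2 ω ∂μ
      = ENNReal.ofReal (1 / p + 1 / (p * (1 - (1 - p) ^ (w - 1)))) := by
  have hsum := hasSum_of_window_recurrence hp hp1.le (by omega : 1 ≤ w - 1)
    (spacedMass_zero p w) (spacedMass_nonneg hp.le hp1.le w) (spacedMass_succ p w)
  have hden : 1 - (1 - p) ^ (w - 1) ≠ 0 :=
    (sub_pos.2 (pow_lt_one₀ (by linarith) (by linarith) (by omega))).ne'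
  simp_rw [lintegral_tauWin_two hmeas, measure_isSpaced hp.le hp1.le hmeas hindep hbern,
    ← ENNReal.ofReal_tsum_of_nonneg (spacedMass_nonneg hp.le hp1.le w) hsum.summable,
    hsum.tsum_eq]
  congr 1
  field_simp
  ring
end

section
/- Let τ_w be the waiting time for s successes within a window of w trials and τ_∞ the unconstrained time of the s-th success, for i.i.d. Bernoulli(p) trials with 0 < p < 1 and w < ∞ finite. Let ε = P(τ_w > w). Then (E(τ_w) - E(τ_∞)) / E(τ_w) < ε. -/
open MeasureTheory ProbabilityTheory ENNReal
open scoped Classical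

/-!
Write `τ_w`, `τ_∞` for the waiting times with window `w` and `∞`, `E = {τ_w > w}`, and `τ'` for
the window-`w` waiting time of the trials after time `w`. Up to time `w` no window is truncated,
so off `E` the two waiting times coincide, while on `E` one has `τ_∞ ≥ w + 1` and, restarting at
time `w`, `τ_w ≤ w + τ'`. Hence `τ_w + 1_E ≤ τ_∞ + 1_E τ'` pointwise. The event `E` depends only
on the first `w` trials and `τ'` only on the later ones, which are distributed like the whole
sequence, so integrating gives `E τ_w + ε ≤ E τ_∞ + ε E τ_w`, that is
`(E τ_w - E τ_∞) / E τ_w ≤ ε - ε / E τ_w < ε`.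
-/

section Window

variable {Ω : Type*} (Z : ℕ → Ω → Bool) (W : ℕ∞)

def windowSuccesses (t : ℕ) (ω : Ω) : ℕ :=
  ((Finset.range t).filter (fun i : ℕ => (t : ℕ∞) ≤ (i : ℕ∞) + W ∧ Z i ω = true)).card

variable (s : ℕ) (ω : Ω)

lemma windowSuccesses_le (t : ℕ) : windowSuccesses Z W t ω ≤ t :=
  (Finset.card_filter_le _ _).trans (Finset.card_range t).le

lemma windowSuccesses_mono {W W' : ℕ∞} (h : W ≤ W') (t : ℕ) :
    windowSuccesses Z W t ω ≤ windowSuccesses Z W' t ω :=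
  Finset.card_le_card <| Finset.monotone_filter_right _ fun _ _ hi =>
    ⟨hi.1.trans (add_le_add_right h _), hi.2⟩

lemma windowSuccesses_eq_top {t : ℕ} (ht : (t : ℕ∞) ≤ W) :
    windowSuccesses Z W t ω = windowSuccesses Z ⊤ t ω := by
  unfold windowSuccesses
  congr 1
  refine Finset.filter_congr fun i _ => ?_
  simp [ht.trans le_add_self]

lemma windowSuccesses_shift_le (a t : ℕ) :
    windowSuccesses (fun i ω => Z (a + i) ω) W t ω ≤ windowSuccesses Z W (a + t) ω := by
  unfold windowSuccesses
  rw [← Finset.card_image_of_injective _ (add_right_injective a)]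
  refine Finset.card_le_card fun j hj => ?_
  obtain ⟨i, hi, rfl⟩ := Finset.mem_image.mp hj
  simp only [Finset.mem_filter, Finset.mem_range] at hi ⊢
  refine ⟨by omega, ?_, hi.2.2⟩
  push_cast
  rw [add_assoc]
  exact add_le_add_right hi.2.1 _

lemma tauWin_le {t : ℕ} (h : s ≤ windowSuccesses Z W t ω) : tauWin Z W s ω ≤ t :=
  sInf_le ⟨t, h, rfl⟩

lemma le_tauWin_iff {x : ℝ≥0∞} :
    x ≤ tauWin Z W s ω ↔ ∀ t, s ≤ windowSuccesses Z W t ω → x ≤ t := by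
  simp only [tauWin, le_sInf_iff, Set.forall_mem_image]
  rfl

lemma natCast_lt_tauWin_iff (n : ℕ) :
    (n : ℝ≥0∞) < tauWin Z W s ω ↔ ∀ t ≤ n, windowSuccesses Z W t ω < s := by
  constructor
  · intro h t ht
    by_contra! hs
    exact (h.trans_le (tauWin_le Z W s ω hs)).not_ge (by exact_mod_cast ht)
  · intro h
    refine (ENNReal.lt_add_right (natCast_ne_top n) one_ne_zero).trans_le ?_
    refine (le_tauWin_iff Z W s ω).mpr fun t ht => ?_
    exact_mod_cast (not_le.mp fun htn => (h t htn).not_ge ht)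

lemma natCast_add_one_le_tauWin {n : ℕ} (h : (n : ℝ≥0∞) < tauWin Z W s ω) :
    (n : ℝ≥0∞) + 1 ≤ tauWin Z W s ω := by
  refine (le_tauWin_iff Z W s ω).mpr fun t ht => ?_
  have hnt : n < t := not_le.mp fun htn => ((natCast_lt_tauWin_iff Z W s ω n).mp h t htn).not_ge ht
  exact_mod_cast hnt

lemma natCast_le_tauWin : (s : ℝ≥0∞) ≤ tauWin Z W s ω :=
  (le_tauWin_iff Z W s ω).mpr fun t ht => by exact_mod_cast ht.trans (windowSuccesses_le Z W ω t)

lemma tauWin_anti {W W' : ℕ∞} (h : W ≤ W') : tauWin Z W' s ω ≤ tauWin Z W s ω :=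
  (le_tauWin_iff Z W s ω).mpr fun _ ht =>
    tauWin_le Z W' s ω (ht.trans (windowSuccesses_mono Z ω h _))

lemma tauWin_le_add_shift (a : ℕ) :
    tauWin Z W s ω ≤ a + tauWin (fun i ω => Z (a + i) ω) W s ω := by
  rw [← tsub_le_iff_left, le_tauWin_iff]
  intro t ht
  rw [tsub_le_iff_left]
  exact_mod_cast tauWin_le Z W s ω (ht.trans (windowSuccesses_shift_le Z W ω a t))

lemma tauWin_top_eq_of_le (w : ℕ) (h : tauWin Z w s ω ≤ w) : tauWin Z ⊤ s ω = tauWin Z w s ω := by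
  refine le_antisymm (tauWin_anti Z s ω le_top) ((le_tauWin_iff Z ⊤ s ω).mpr fun t ht => ?_)
  rcases le_or_gt t w with htw | htw
  · exact tauWin_le Z w s ω (by rwa [windowSuccesses_eq_top Z w ω (by exact_mod_cast htw)])
  · exact h.trans (by exact_mod_cast htw.le)

lemma natCast_lt_tauWin_iff_top (w : ℕ) :
    (w : ℝ≥0∞) < tauWin Z w s ω ↔ (w : ℝ≥0∞) < tauWin Z ⊤ s ω := by
  simp only [natCast_lt_tauWin_iff]
  refine forall₂_congr fun t ht => ?_
  rw [windowSuccesses_eq_top Z w ω (by exact_mod_cast ht)]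

lemma natCast_lt_tauWin_of_forall_eq_false (hs : s ≠ 0) {n : ℕ} (h : ∀ i < n, Z i ω = false) :
    (n : ℝ≥0∞) < tauWin Z W s ω := by
  refine (natCast_lt_tauWin_iff Z W s ω n).mpr fun t ht => ?_
  suffices windowSuccesses Z W t ω = 0 by omega
  refine Finset.card_eq_zero.mpr (Finset.filter_eq_empty_iff.mpr fun i hi => ?_)
  simp [h i ((Finset.mem_range.mp hi).trans_le ht)]

end Window

section Measurability

variable {Ω : Type*} {m : MeasurableSpace Ω} (Z : ℕ → Ω → Bool) (W : ℕ∞) (s : ℕ)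

lemma measurable_windowSuccesses {t : ℕ} (hZ : ∀ i < t, Measurable[m] (Z i)) :
    Measurable[m] (windowSuccesses Z W t) := by
  have : windowSuccesses Z W t = fun ω =>
      ∑ i ∈ Finset.range t, if (t : ℕ∞) ≤ (i : ℕ∞) + W ∧ Z i ω = true then 1 else 0 :=
    funext fun ω => Finset.card_filter _ _
  rw [this]
  refine Finset.measurable_sum _ fun i hi => Measurable.ite ?_ measurable_const measurable_const
  have hZi := hZ i (Finset.mem_range.mp hi)
  measurability

lemma measurableSet_natCast_lt_tauWin {n : ℕ} (hZ : ∀ i < n, Measurable[m] (Z i)) :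
    MeasurableSet[m] {ω | (n : ℝ≥0∞) < tauWin Z W s ω} := by
  have : {ω | (n : ℝ≥0∞) < tauWin Z W s ω}
      = ⋂ t ∈ Finset.range (n + 1), windowSuccesses Z W t ⁻¹' Set.Iio s := by
    ext ω
    simp [natCast_lt_tauWin_iff]
  rw [this]
  refine Finset.measurableSet_biInter _ fun t ht => measurableSet_preimage ?_ measurableSet_Iio
  exact measurable_windowSuccesses Z W fun i hi =>
    hZ i (hi.trans_le (Nat.lt_succ_iff.mp (Finset.mem_range.mp ht)))

lemma measurable_tauWin (hZ : ∀ i, Measurable[m] (Z i)) : Measurable[m] (tauWin Z W s) := by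
  have : tauWin Z W s =
      fun ω => ⨅ t : ℕ, if s ≤ windowSuccesses Z W t ω then (t : ℝ≥0∞) else ⊤ := by
    ext ω
    simp only [tauWin, sInf_image, iInf_eq_if]
    rfl
  rw [this]
  refine Measurable.iInf fun t => Measurable.ite ?_ measurable_const measurable_const
  exact measurableSet_le measurable_const (measurable_windowSuccesses Z W fun i _ => hZ i)

end Measurability

lemma MeasureTheory.Measure.map_eq_map_of_measure_eq_true {Ω Ω' : Type*} [MeasurableSpace Ω]
    [MeasurableSpace Ω'] {μ : Measure Ω} {ν : Measure Ω'} [IsProbabilityMeasure μ]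
    [IsProbabilityMeasure ν] {X : Ω → Bool} {Y : Ω' → Bool} (hX : Measurable X)
    (hY : Measurable Y) (h : μ {ω | X ω = true} = ν {ω | Y ω = true}) : μ.map X = ν.map Y := by
  refine Measure.ext_of_singleton fun b => ?_
  rw [Measure.map_apply hX (measurableSet_singleton b),
    Measure.map_apply hY (measurableSet_singleton b)]
  cases b
  · rw [show ({false} : Set Bool) = {true}ᶜ by ext; simp, Set.preimage_compl, Set.preimage_compl,
      prob_compl_eq_one_sub (hX (measurableSet_singleton true)),
      prob_compl_eq_one_sub (hY (measurableSet_singleton true))]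
    exact congrArg (1 - ·) h
  · exact h

lemma ProbabilityTheory.iIndepFun.identDistrib_shift {Ω β : Type*} [MeasurableSpace Ω]
    [MeasurableSpace β] {μ : Measure Ω} [IsProbabilityMeasure μ] {X : ℕ → Ω → β}
    (hX : ∀ i, Measurable (X i)) (hind : iIndepFun X μ) (a : ℕ)
    (hident : ∀ i, μ.map (X (a + i)) = μ.map (X i)) :
    IdentDistrib (fun ω i => X (a + i) ω) (fun ω i => X i ω) μ μ where
  aemeasurable_fst := (measurable_pi_lambda _ fun i => hX (a + i)).aemeasurable
  aemeasurable_snd := (measurable_pi_lambda _ hX).aemeasurable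
  map_eq := by
    rw [(hind.precomp (add_right_injective a)).map_fun_eq_infinitePi_map (fun i => hX (a + i)),
      hind.map_fun_eq_infinitePi_map hX]
    simp_rw [hident]

section Bernoulli

variable {Ω : Type*} [MeasurableSpace Ω] (μ : Measure Ω) {Z : ℕ → Ω → Bool}

lemma lintegral_tauWin_shift [IsProbabilityMeasure μ] (hmeas : ∀ i, Measurable (Z i))
    (hindep : iIndepFun Z μ) {q : ℝ≥0∞} (hbern : ∀ i, μ {ω | Z i ω = true} = q) (W : ℕ∞)
    (s a : ℕ) :
    ∫⁻ ω, tauWin (fun i ω => Z (a + i) ω) W s ω ∂μ = ∫⁻ ω, tauWin Z W s ω ∂μ := by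
  have hident := hindep.identDistrib_shift hmeas a fun i =>
    Measure.map_eq_map_of_measure_eq_true (hmeas _) (hmeas _) ((hbern _).trans (hbern i).symm)
  exact (hident.comp (measurable_tauWin (fun i (x : ℕ → Bool) => x i) W s
    measurable_pi_apply)).lintegral_eq

lemma lintegral_indicator_mul_tauWin_shift (hmeas : ∀ i, Measurable (Z i))
    (hindep : iIndepFun Z μ) (W W' : ℕ∞) (s s' n : ℕ) :
    ∫⁻ ω, {ω | (n : ℝ≥0∞) < tauWin Z W s ω}.indicator 1 ω
        * tauWin (fun i ω => Z (n + i) ω) W' s' ω ∂μ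
      = μ {ω | (n : ℝ≥0∞) < tauWin Z W s ω}
        * ∫⁻ ω, tauWin (fun i ω => Z (n + i) ω) W' s' ω ∂μ := by
  set M : ℕ → MeasurableSpace Ω := fun i => MeasurableSpace.comap (Z i) inferInstance
  have hM : ∀ i, M i ≤ ‹MeasurableSpace Ω› := fun i => (hmeas i).comap_le
  have hZM : ∀ (S : Set ℕ), ∀ i ∈ S, Measurable[⨆ j ∈ S, M j] (Z i) := fun S i hi =>
    Measurable.of_comap_le (le_iSup₂ (f := fun j _ => M j) i hi)
  have hindep_past_future : Indep (⨆ i ∈ Set.Iio n, M i) (⨆ i ∈ Set.Ici n, M i) μ :=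
    indep_iSup_of_disjoint hM hindep.iIndep (Set.Iio_disjoint_Ici le_rfl)
  rw [lintegral_mul_eq_lintegral_mul_lintegral_of_independent_measurableSpace
      (iSup₂_le fun i _ => hM i) (iSup₂_le fun i _ => hM i) hindep_past_future
      (Measurable.indicator (f := 1) measurable_const (measurableSet_natCast_lt_tauWin Z W s
        fun i hi => hZM _ i hi))
      (measurable_tauWin _ W' s' fun i => hZM _ (n + i) (Nat.le_add_right n i)),
    lintegral_indicator_one (measurableSet_natCast_lt_tauWin Z W s fun i _ => hmeas i)]

lemma measure_natCast_lt_tauWin_pos [IsProbabilityMeasure μ] (hmeas : ∀ i, Measurable (Z i))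
    (hindep : iIndepFun Z μ) (hfail : ∀ i, μ {ω | Z i ω = true} < 1) (W : ℕ∞) {s : ℕ}
    (hs : s ≠ 0) (n : ℕ) : 0 < μ {ω | (n : ℝ≥0∞) < tauWin Z W s ω} := by
  have hnofail : μ (⋂ i ∈ Finset.range n, Z i ⁻¹' {false}) ≠ 0 := by
    rw [hindep.meas_biInter fun i _ => ⟨{false}, measurableSet_singleton _, rfl⟩,
      Finset.prod_ne_zero_iff]
    intro i _
    have : Z i ⁻¹' {false} = {ω | Z i ω = true}ᶜ := by ext; simp
    rw [this, prob_compl_eq_one_sub (s := {ω | Z i ω = true})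
      (hmeas i (measurableSet_singleton true))]
    exact (tsub_pos_of_lt (hfail i)).ne'
  refine (pos_iff_ne_zero.mpr hnofail).trans_le (measure_mono fun ω hω => ?_)
  simp only [Set.mem_iInter, Finset.mem_range, Set.mem_preimage, Set.mem_singleton_iff] at hω
  exact natCast_lt_tauWin_of_forall_eq_false Z W s ω hs hω

end Bernoulli

lemma ENNReal.sub_div_lt_of_add_le_add_mul {a b ε : ℝ≥0∞} (ha : 1 ≤ a) (hε₀ : ε ≠ 0)
    (hε : ε ≠ ⊤) (h : a + ε ≤ b + ε * a) : (a - b) / a < ε := by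
  rcases eq_or_ne a ⊤ with rfl | ha_top
  · simpa using pos_iff_ne_zero.mpr hε₀
  have ha₀ : a ≠ 0 := (one_pos.trans_le ha).ne'
  have hεa : ε ≤ ε * a := le_mul_of_one_le_right' ha
  rw [ENNReal.div_lt_iff (Or.inl ha₀) (Or.inl ha_top)]
  calc a - b ≤ ε * a - ε := by
        rw [tsub_le_iff_right, ENNReal.sub_add_eq_add_sub hεa hε, add_comm]
        exact ENNReal.le_sub_of_add_le_right hε h
    _ < ε * a := ENNReal.sub_lt_self (ENNReal.mul_ne_top hε ha_top) (mul_ne_zero hε₀ ha₀) hε₀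

lemma tauWin_add_indicator_le {Ω : Type*} (Z : ℕ → Ω → Bool) (w s : ℕ) (ω : Ω) :
    tauWin Z w s ω + {ω | (w : ℝ≥0∞) < tauWin Z w s ω}.indicator 1 ω
      ≤ tauWin Z ⊤ s ω
        + {ω | (w : ℝ≥0∞) < tauWin Z w s ω}.indicator 1 ω
          * tauWin (fun i ω => Z (w + i) ω) w s ω := by
  by_cases hω : (w : ℝ≥0∞) < tauWin Z w s ω
  · simp only [Set.indicator_of_mem (show ω ∈ {ω | (w : ℝ≥0∞) < tauWin Z w s ω} from hω),
      Pi.one_apply, one_mul]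
    calc tauWin Z w s ω + 1 ≤ (w + 1) + tauWin (fun i ω => Z (w + i) ω) w s ω := by
          rw [add_right_comm]
          exact add_le_add_left (tauWin_le_add_shift Z w s ω w) 1
      _ ≤ tauWin Z ⊤ s ω + tauWin (fun i ω => Z (w + i) ω) w s ω :=
          add_le_add_left (natCast_add_one_le_tauWin Z ⊤ s ω
            ((natCast_lt_tauWin_iff_top Z s ω w).mp hω)) _
  · simp only [Set.indicator_of_notMem (show ω ∉ {ω | (w : ℝ≥0∞) < tauWin Z w s ω} from hω),
      add_zero, zero_mul]
    exact (tauWin_top_eq_of_le Z s ω w (not_lt.mp hω)).ge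

theorem stmt_12_general {Ω : Type*} [MeasurableSpace Ω] (μ : Measure Ω) [IsProbabilityMeasure μ]
    (p : ℝ) (hp1 : p < 1)
    (Z : ℕ → Ω → Bool)
    (hmeas : ∀ i, Measurable (Z i))
    (hindep : iIndepFun Z μ)
    (hbern : ∀ i, μ {ω | Z i ω = true} = ENNReal.ofReal p)
    (w s : ℕ) (hs : 1 ≤ s) :
    ((∫⁻ ω, tauWin Z (w : ℕ∞) s ω ∂μ) - ∫⁻ ω, tauWin Z ⊤ s ω ∂μ)
        / (∫⁻ ω, tauWin Z (w : ℕ∞) s ω ∂μ)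
      < μ {ω | (w : ℝ≥0∞) < tauWin Z (w : ℕ∞) s ω} := by
  set E := {ω | (w : ℝ≥0∞) < tauWin Z w s ω}
  have hE : MeasurableSet E := measurableSet_natCast_lt_tauWin Z w s fun i _ => hmeas i
  have hε : μ E ≠ 0 := (measure_natCast_lt_tauWin_pos μ hmeas hindep
    (fun i => (hbern i).trans_lt (ENNReal.ofReal_lt_one.mpr hp1)) w (by omega) w).ne'
  have hA : 1 ≤ ∫⁻ ω, tauWin Z w s ω ∂μ := calc
    1 = ∫⁻ _, (1 : ℝ≥0∞) ∂μ := by simp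
    _ ≤ ∫⁻ ω, tauWin Z w s ω ∂μ := lintegral_mono fun ω =>
      (Nat.one_le_cast.mpr hs).trans (natCast_le_tauWin Z w s ω)
  refine ENNReal.sub_div_lt_of_add_le_add_mul hA hε (measure_ne_top μ E) ?_
  calc ∫⁻ ω, tauWin Z w s ω ∂μ + μ E
      = ∫⁻ ω, tauWin Z w s ω + E.indicator 1 ω ∂μ := by
        rw [lintegral_add_left (measurable_tauWin Z w s hmeas), lintegral_indicator_one hE]
    _ ≤ ∫⁻ ω, tauWin Z ⊤ s ω + E.indicator 1 ω * tauWin (fun i ω => Z (w + i) ω) w s ω ∂μ :=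
        lintegral_mono (tauWin_add_indicator_le Z w s)
    _ = ∫⁻ ω, tauWin Z ⊤ s ω ∂μ + μ E * ∫⁻ ω, tauWin Z w s ω ∂μ := by
        rw [lintegral_add_left (measurable_tauWin Z ⊤ s hmeas),
          lintegral_indicator_mul_tauWin_shift μ hmeas hindep,
          lintegral_tauWin_shift μ hmeas hindep hbern]

/-- Infinite-window approximation of the expected waiting time: with
`ε = P(τ_{(w,s)} > w)`, one has `(E(τ_{(w,s)}) - E(τ_{(∞,s)})) / E(τ_{(w,s)}) < ε`. -/
theorem stmt_12 {Ω : Type*} [MeasurableSpace Ω] (μ : Measure Ω) [IsProbabilityMeasure μ]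
    (p : ℝ) (hp : 0 < p) (hp1 : p < 1)
    (Z : ℕ → Ω → Bool)
    (hmeas : ∀ i, Measurable (Z i))
    (hindep : iIndepFun Z μ)
    (hbern : ∀ i, μ {ω | Z i ω = true} = ENNReal.ofReal p)
    (w s : ℕ) (hs : 1 ≤ s) (hsw : s ≤ w) :
    ((∫⁻ ω, tauWin Z (w : ℕ∞) s ω ∂μ) - ∫⁻ ω, tauWin Z ⊤ s ω ∂μ)
        / (∫⁻ ω, tauWin Z (w : ℕ∞) s ω ∂μ)
      < μ {ω | (w : ℝ≥0∞) < tauWin Z (w : ℕ∞) s ω} :=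
  stmt_12_general μ p hp1 Z hmeas hindep hbern w s hs
end

section
/- For any two binary strings x ∈ Ω(w,s) and y ∈ Ω(w,s) (ending patterns), the star product x*y, defined as Σ_{j=1}^{min(k,m)} ∏_{i=1}^{j} δ(x_i, y_{m-j+i}) with δ(a,b) = 1/p_a if a = b and 0 otherwise (p_1 = p, p_0 = 1-p), is, as a function of p on (0,1), of order 1/p^s as p → 0 if and only if x = y; moreover for all x, y ∈ Ω(w,s), x*y ≥ 1/p. -/
/-!
The `j`-th term of `x*y` vanishes unless the prefix of `x` of length `j` equals the suffix of `y`
of length `j`; then it is `p^{-a} (1-p)^{-(j-a)}`, where `a` is the number of ones in that prefix.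
Multiplied by `p^s` it tends, as `p → 0⁺`, to `1` if `a = s` and to `0` otherwise. Since `x` ends
in a one, `a = s` only for `j = |x|`, where the overlap condition says that `x` is a suffix of `y`;
as `y` starts with a one and has as many ones as `x`, this forces `x = y`. The bound `x*y ≥ 1/p`
is the `j = 1` term, all terms being nonnegative.
-/

open MeasureTheory ProbabilityTheory ENNReal Filter
open scoped Classical Topology

noncomputable def starProd (p : ℝ) (x y : List Bool) : ℝ :=
  ∑ j ∈ Finset.Icc 1 (min x.length y.length),
    ∏ i ∈ Finset.range j,
      (if x.getD i false = y.getD (y.length - j + i) false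
       then (if x.getD i false then p else 1 - p)⁻¹ else 0)

namespace List

theorem prod_map_bool {M : Type*} [CommMonoid M] (f : Bool → M) (l : List Bool) :
    (l.map f).prod = f true ^ l.count true * f false ^ l.count false := by
  induction l with
  | nil => simp
  | cons b t ih => cases b <;> simp [ih, pow_succ] <;> ac_rfl

theorem prod_range_getD {α M : Type*} [CommMonoid M] (f : α → M) (d : α) (l : List α) {j : ℕ}
    (hj : j ≤ l.length) : ∏ i ∈ Finset.range j, f (l.getD i d) = ((l.take j).map f).prod := by
  induction j with
  | zero => simp
  | succ n ih =>
    rw [Finset.prod_range_succ, ih (by omega), take_add_one, map_append, prod_append,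
      getElem?_eq_getElem (by omega), getD_eq_getElem _ _ (by omega)]
    simp

theorem take_eq_drop_iff_getD {α : Type*} (d : α) {x y : List α} {j : ℕ} (hjx : j ≤ x.length)
    (hjy : j ≤ y.length) :
    x.take j = y.drop (y.length - j) ↔ ∀ i < j, x.getD i d = y.getD (y.length - j + i) d := by
  rw [List.ext_getElem_iff]
  simp only [length_take, length_drop, getElem_take, getElem_drop]
  constructor
  · rintro ⟨-, h⟩ i hi
    rw [getD_eq_getElem _ _ (by omega), getD_eq_getElem _ _ (by omega)]
    exact h i (by omega) (by omega)
  · refine fun h => ⟨by omega, fun i hi _ => ?_⟩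
    have := h i (by omega)
    rwa [getD_eq_getElem _ _ (by omega), getD_eq_getElem _ _ (by omega)] at this

theorem count_take_lt_count_of_getLast? {x : List Bool} (hx : x.getLast? = some true) {j : ℕ}
    (hj : j < x.length) : (x.take j).count true < x.count true := by
  have hmem : true ∈ x.drop j :=
    mem_of_mem_getLast? (by rwa [getLast?_drop, if_neg (by omega)])
  conv_rhs => rw [← take_append_drop j x, count_append]
  have := count_pos_iff.mpr hmem
  omega

theorem count_drop_lt_count_of_head? {y : List Bool} (hy : y.head? = some true) {n : ℕ}
    (hn : 0 < n) : (y.drop n).count true < y.count true := by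
  obtain ⟨t, rfl⟩ : ∃ t, y = true :: t := by
    cases y with
    | nil => simp at hy
    | cons a t => simp_all
  obtain ⟨n, rfl⟩ := Nat.exists_eq_add_of_lt hn
  simpa using Nat.lt_succ_of_le ((drop_sublist n t).count_le true)

end List

open List

theorem Finset.prod_range_ite_getD {α M : Type*} [DecidableEq α] [CommMonoidWithZero M]
    (f : α → M) (d : α) {x y : List α} {j : ℕ} (hjx : j ≤ x.length) (hjy : j ≤ y.length) :
    ∏ i ∈ Finset.range j, (if x.getD i d = y.getD (y.length - j + i) d then f (x.getD i d) else 0)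
      = if x.take j = y.drop (y.length - j) then ((x.take j).map f).prod else 0 := by
  split_ifs with h
  · rw [← prod_range_getD f d x hjx]
    refine Finset.prod_congr rfl fun i hi => if_pos ?_
    exact (take_eq_drop_iff_getD d hjx hjy).mp h i (Finset.mem_range.mp hi)
  · obtain ⟨i, hi, hne⟩ : ∃ i < j, x.getD i d ≠ y.getD (y.length - j + i) d := by
      simpa [take_eq_drop_iff_getD d hjx hjy] using h
    exact Finset.prod_eq_zero (Finset.mem_range.mpr hi) (if_neg hne)

theorem starProd_eq_sum (p : ℝ) (x y : List Bool) :
    starProd p x y = ∑ j ∈ Finset.Icc 1 (min x.length y.length),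
      if x.take j = y.drop (y.length - j) then
        ((x.take j).map fun b => (if b then p else 1 - p)⁻¹).prod
      else 0 := by
  refine Finset.sum_congr rfl fun j hj => ?_
  have hj := (Finset.mem_Icc.mp hj).2
  exact Finset.prod_range_ite_getD (fun b : Bool => (if b then p else 1 - p)⁻¹) false (hj.trans (min_le_left _ _))
    (hj.trans (min_le_right _ _))

theorem one_div_le_starProd {p : ℝ} (hp : p ∈ Set.Ioo (0 : ℝ) 1) {x y : List Bool}
    (hx : x.head? = some true) (hy : y.getLast? = some true) : 1 / p ≤ starProd p x y := by
  have hx0 : x.getD 0 false = true := by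
    simp [getD_eq_getElem?_getD, ← head?_eq_getElem?, hx]
  have hy0 : y.getD (y.length - 1) false = true := by
    simp [getD_eq_getElem?_getD, ← getLast?_eq_getElem?, hy]
  have hone : 1 ∈ Finset.Icc 1 (min x.length y.length) := by
    have := length_pos_of_mem (mem_of_mem_head? hx)
    have := length_pos_of_mem (mem_of_mem_getLast? hy)
    simp only [Finset.mem_Icc]; omega
  refine le_of_eq_of_le ?_ (Finset.single_le_sum (fun j _ => Finset.prod_nonneg fun i _ => ?_) hone)
  · rw [Finset.prod_range_one, Nat.add_zero, hx0, hy0]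
    simp
  · have := hp.1; have := hp.2
    split_ifs <;> positivity

theorem tendsto_prod_map_inv_mul_pow {l : List Bool} {s : ℕ} (hl : l.count true ≤ s) :
    Tendsto (fun p : ℝ => (l.map fun b => (if b then p else 1 - p)⁻¹).prod * p ^ s) (𝓝[>] 0)
      (𝓝 (if l.count true = s then 1 else 0)) := by
  have hcont : ContinuousAt (fun p : ℝ => p ^ (s - l.count true) * (1 - p)⁻¹ ^ l.count false) 0 := by
    fun_prop (disch := norm_num)
  have hlim : (0 : ℝ) ^ (s - l.count true) * (1 - 0)⁻¹ ^ l.count false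
      = if l.count true = s then 1 else 0 := by
    split_ifs with h
    · simp [h]
    · simp [Nat.sub_ne_zero_of_lt (lt_of_le_of_ne hl h)]
  rw [← hlim]
  refine (hcont.tendsto.mono_left nhdsWithin_le_nhds).congr' ?_
  filter_upwards [self_mem_nhdsWithin] with p (hp : 0 < p)
  rw [prod_map_bool, if_pos rfl, if_neg Bool.false_ne_true, pow_sub₀ p hp.ne' hl, inv_pow]
  ring

theorem eq_of_eq_drop_of_count_eq {x y : List Bool} (hy : y.head? = some true)
    (hcount : x.count true = y.count true) {n : ℕ} (h : x = y.drop n) : x = y := by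
  rcases Nat.eq_zero_or_pos n with rfl | hn
  · simpa using h
  · have := count_drop_lt_count_of_head? hy hn
    rw [← h] at this
    omega

theorem tendsto_starProd_mul_pow {x y : List Bool} (hx : x.getLast? = some true)
    (hy : y.head? = some true) (hcount : x.count true = y.count true) :
    Tendsto (fun p : ℝ => starProd p x y * p ^ x.count true) (𝓝[>] 0)
      (𝓝 (if x = y then 1 else 0)) := by
  set L : ℕ → ℝ := fun j => if x.take j = y.drop (y.length - j) then
    (if (x.take j).count true = x.count true then 1 else 0) else 0 with hL
  have hLlast : L x.length = if x = y then 1 else 0 := by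
    simp only [hL, take_length, if_true]
    refine if_congr ⟨eq_of_eq_drop_of_count_eq hy hcount, ?_⟩ rfl rfl
    rintro rfl
    simp
  have hLlt : ∀ j ∈ Finset.Icc 1 (min x.length y.length), j ≠ x.length → L j = 0 := by
    intro j hj hne
    have hlt : j < x.length := lt_of_le_of_ne ((Finset.mem_Icc.mp hj).2.trans (min_le_left _ _)) hne
    simp [hL, (count_take_lt_count_of_getLast? hx hlt).ne]
  have hLnot : x.length ∉ Finset.Icc 1 (min x.length y.length) → L x.length = 0 := by
    intro hmem
    rw [hLlast, if_neg]
    rintro rfl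
    have := length_pos_of_mem (mem_of_mem_getLast? hx)
    exact hmem (Finset.mem_Icc.mpr ⟨this, (min_self _).ge⟩)
  rw [← hLlast, ← Finset.sum_eq_single _ hLlt hLnot]
  simp_rw [starProd_eq_sum, Finset.sum_mul, ite_mul, zero_mul]
  refine tendsto_finsetSum _ fun j _ => ?_
  by_cases h : x.take j = y.drop (y.length - j)
  · simpa only [hL, h, if_true] using
      tendsto_prod_map_inv_mul_pow ((take_sublist j x).count_le true)
  · simpa only [hL, h, if_false] using tendsto_const_nhds

theorem stmt_14_general (w s : ℕ)
    (x y : List Bool)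
    (hx : x.length ≤ w ∧ x.head? = some true ∧ x.getLast? = some true ∧ x.count true = s)
    (hy : y.length ≤ w ∧ y.head? = some true ∧ y.getLast? = some true ∧ y.count true = s) :
    (x = y → Tendsto (fun p : ℝ => starProd p x y * p ^ s) (𝓝[>] 0) (𝓝 1))
    ∧ (x ≠ y → Tendsto (fun p : ℝ => starProd p x y * p ^ s) (𝓝[>] 0) (𝓝 0))
    ∧ ∀ p : ℝ, p ∈ Set.Ioo (0 : ℝ) 1 → 1 / p ≤ starProd p x y := by
  obtain ⟨-, hx_head, hx_last, rfl⟩ := hx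
  obtain ⟨-, hy_head, hy_last, hy_count⟩ := hy
  have hlim := tendsto_starProd_mul_pow hx_last hy_head hy_count.symm
  refine ⟨fun h => ?_, fun h => ?_, fun p hp => one_div_le_starProd hp hx_head hy_last⟩
  · rwa [if_pos h] at hlim
  · rwa [if_neg h] at hlim

/-- For ending patterns `x, y ∈ Ω(w,s)`, the star product `x*y`, as a function of `p`
on `(0,1)`, is of order `1/p^s` as `p → 0⁺` iff `x = y` (namely `x*x · p^s → 1` while
for `x ≠ y`, `x*y · p^s → 0`); moreover `x*y ≥ 1/p` for all `x, y ∈ Ω(w,s)`. -/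
theorem stmt_14 (w s : ℕ) (hs : 1 ≤ s) (hsw : s ≤ w)
    (x y : List Bool)
    (hx : x.length ≤ w ∧ x.head? = some true ∧ x.getLast? = some true ∧ x.count true = s)
    (hy : y.length ≤ w ∧ y.head? = some true ∧ y.getLast? = some true ∧ y.count true = s) :
    (x = y → Tendsto (fun p : ℝ => starProd p x y * p ^ s) (𝓝[>] 0) (𝓝 1))
    ∧ (x ≠ y → Tendsto (fun p : ℝ => starProd p x y * p ^ s) (𝓝[>] 0) (𝓝 0))
    ∧ ∀ p : ℝ, p ∈ Set.Ioo (0 : ℝ) 1 → 1 / p ≤ starProd p x y :=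
  stmt_14_general w s x y hx hy
end

section
/- Let A be the (N+1)×(N+1) matrix with N = C(w-1, s-1) defined by A_{00} = 0, A_{0j} = 1 and A_{i0} = −1 for i,j ≥ 1, and A_{ij} = x^{(i)} * x^{(j)} for i,j ≥ 1, where {x^{(i)}} enumerates Ω(w,s). Then, as p → 0, det A ~ N · p^{−s(N−1)} and the determinant of the lower-right N×N block B satisfies det B ~ p^{−sN}; consequently E(τ_{(w,s)}) = det B / det A ~ 1/(N p^s). -/
open MeasureTheory ProbabilityTheory ENNReal Filter Matrix
open scoped Classical Topology

/-!
Call a string a pattern if it starts and ends with `1` and contains `s` ones. For patterns `x, y`,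
the `j`-th summand of `x * y` vanishes unless the length-`j` prefix of `x` equals the
length-`j` suffix of `y`, and then it is `p⁻ᵃ (1-p)^(a-j)`, where `a` counts the ones in that
prefix. Since `a ≤ s`, with equality only for the full overlap `x = y`, we get
`pˢ (x * y) → [x = y]`, i.e. `pˢ B → I`. Scaling the block of the bordered matrix by `c`
multiplies its determinant by `c^(N-1)`, and the bordered matrix with identity block has
determinant `N`; the three limits follow by continuity of `det`.
-/

open Finset

structure IsPattern (s : ℕ) (x : List Bool) : Prop where
  head : x.head? = some true
  getLast : x.getLast? = some true
  count : x.count true = s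

namespace IsPattern

variable {s j k : ℕ} {x y : List Bool}

lemma length_pos (hx : IsPattern s x) : 0 < x.length :=
  List.length_pos_of_mem (List.mem_of_head? hx.head)

lemma count_take_lt (hx : IsPattern s x) (hj : j < x.length) : (x.take j).count true < s := by
  have hmem : true ∈ x.drop j :=
    List.mem_of_getLast? (by rw [List.getLast?_drop, if_neg (by omega), hx.getLast])
  have h := congrArg (List.count true) (List.take_append_drop j x)
  rw [List.count_append, hx.count] at h
  have := List.count_pos_iff.2 hmem
  omega

lemma count_drop_lt (hx : IsPattern s x) (hk : 0 < k) : (x.drop k).count true < s := by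
  have hmem : true ∈ x.take k :=
    List.mem_of_head? (by rw [List.head?_take, if_neg (by omega), hx.head])
  have h := congrArg (List.count true) (List.take_append_drop k x)
  rw [List.count_append, hx.count] at h
  have := List.count_pos_iff.2 hmem
  omega

lemma length_le_of_count_take (hx : IsPattern s x) (h : (x.take j).count true = s) :
    x.length ≤ j := by
  by_contra! hj
  exact (hx.count_take_lt hj).ne h

lemma eq_of_take_eq_drop (hx : IsPattern s x) (hy : IsPattern s y) (h : x.take j = y.drop k)
    (hc : (x.take j).count true = s) : x = y := by
  have hk : k = 0 := by
    by_contra hk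
    exact (hy.count_drop_lt (Nat.pos_of_ne_zero hk)).ne (h ▸ hc)
  rwa [List.take_of_length_le (hx.length_le_of_count_take hc), hk, List.drop_zero] at h

end IsPattern

lemma List.prod_range_getD_s18 {M : Type*} [CommMonoid M] (f : Bool → M) {x : List Bool} {j : ℕ}
    (hj : j ≤ x.length) :
    ∏ i ∈ Finset.range j, f (x.getD i false) =
      f true ^ (x.take j).count true * f false ^ (x.take j).count false := by
  induction x generalizing j with
  | nil => simp_all
  | cons b l ih =>
    cases j with
    | zero => simp
    | succ j =>
      rw [Finset.prod_range_succ', List.getD_cons_zero]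
      simp only [List.getD_cons_succ, List.take_succ_cons, List.count_cons,
        ih (by simpa using hj)]
      cases b <;> simp [pow_succ] <;> ac_rfl

lemma List.take_eq_drop_of_getD_eq {α : Type*} {d : α} {x y : List α} {j : ℕ}
    (hjx : j ≤ x.length) (hjy : j ≤ y.length)
    (h : ∀ i ∈ Finset.range j, x.getD i d = y.getD (y.length - j + i) d) :
    x.take j = y.drop (y.length - j) := by
  refine List.ext_getElem (by simp; omega) fun i hi _ => ?_
  simp only [List.length_take, lt_min_iff] at hi
  have := h i (mem_range.2 hi.1)
  rw [List.getD_eq_getElem _ _ hi.2, List.getD_eq_getElem _ _ (by omega)] at this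
  rw [List.getElem_take, List.getElem_drop, this]

noncomputable def starTerm (p : ℝ) (x y : List Bool) (j : ℕ) : ℝ :=
  ∏ i ∈ range j,
    (if x.getD i false = y.getD (y.length - j + i) false
     then (if x.getD i false then p else 1 - p)⁻¹ else 0)

lemma starProd_eq_sum_starTerm (p : ℝ) (x y : List Bool) :
    starProd p x y = ∑ j ∈ Icc 1 (min x.length y.length), starTerm p x y j :=
  rfl

lemma tendsto_pow_mul_starTerm {s j : ℕ} {x y : List Bool} (hx : IsPattern s x)
    (hy : IsPattern s y) (hjx : j ≤ x.length) (hjy : j ≤ y.length) :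
    Tendsto (fun p : ℝ => p ^ s * starTerm p x y j) (𝓝[>] 0)
      (𝓝 (if x = y ∧ j = x.length then 1 else 0)) := by
  by_cases hm : ∀ i ∈ range j, x.getD i false = y.getD (y.length - j + i) false
  · set a := (x.take j).count true
    have ha : a ≤ s := hx.count ▸ (List.take_sublist j x).count_le true
    have hfalse : (x.take j).count false = j - a := by
      have := List.count_true_add_count_false (x.take j)
      rw [List.length_take_of_le hjx] at this
      omega
    have hterm : ∀ p : ℝ, p ≠ 0 →
        p ^ s * starTerm p x y j = p ^ (s - a) * (1 - p)⁻¹ ^ (j - a) := by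
      intro p hp
      rw [starTerm, prod_congr rfl fun i hi => if_pos (hm i hi),
        List.prod_range_getD_s18 (fun b => (if b then p else 1 - p)⁻¹) hjx, hfalse]
      simp only [if_true, Bool.false_eq_true, if_false]
      rw [← mul_assoc, pow_sub₀ p hp ha, inv_pow]
    have hval : (if x = y ∧ j = x.length then (1 : ℝ) else 0) =
        (0 : ℝ) ^ (s - a) * (1 - 0)⁻¹ ^ (j - a) := by
      by_cases has : a = s
      · have hxy := hx.eq_of_take_eq_drop hy (List.take_eq_drop_of_getD_eq hjx hjy hm) has
        have hj : j = x.length := le_antisymm hjx (hx.length_le_of_count_take has)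
        subst hxy hj
        simp [has]
      · have hne : ¬(x = y ∧ j = x.length) := by
          rintro ⟨-, rfl⟩
          exact has (by simp only [a, List.take_length, hx.count])
        rw [if_neg hne, zero_pow (by omega), zero_mul]
    have hcont : ContinuousAt (fun p : ℝ => p ^ (s - a) * (1 - p)⁻¹ ^ (j - a)) 0 := by
      fun_prop (disch := norm_num)
    rw [hval]
    refine Tendsto.congr' ?_ (hcont.tendsto.mono_left nhdsWithin_le_nhds)
    filter_upwards [self_mem_nhdsWithin] with p hp
    exact (hterm p (ne_of_gt hp)).symm
  · push Not at hm
    obtain ⟨i, hi, hne⟩ := hm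
    have hne' : ¬(x = y ∧ j = x.length) := by
      rintro ⟨rfl, rfl⟩
      exact hne (by rw [Nat.sub_self, Nat.zero_add])
    have hzero : ∀ p, starTerm p x y j = 0 := fun p => prod_eq_zero hi (if_neg hne)
    simp only [hzero, mul_zero, if_neg hne']
    exact tendsto_const_nhds

lemma tendsto_pow_mul_starProd {s : ℕ} {x y : List Bool} (hx : IsPattern s x)
    (hy : IsPattern s y) :
    Tendsto (fun p : ℝ => p ^ s * starProd p x y) (𝓝[>] 0) (𝓝 (if x = y then 1 else 0)) := by
  have hsum : (if x = y then (1 : ℝ) else 0) =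
      ∑ j ∈ Icc 1 (min x.length y.length), if x = y ∧ j = x.length then 1 else 0 := by
    by_cases hxy : x = y
    · subst hxy
      simp [List.ne_nil_of_length_pos hx.length_pos]
    · simp [hxy]
  simp only [starProd_eq_sum_starTerm, mul_sum, hsum]
  refine tendsto_finsetSum _ fun j hj => ?_
  rw [mem_Icc, le_min_iff] at hj
  exact tendsto_pow_mul_starTerm hx hy hj.2.1 hj.2.2

noncomputable def starMatrix {n : ℕ} (p : ℝ) (e : Fin n → List Bool) : Matrix (Fin n) (Fin n) ℝ :=
  Matrix.of fun i j => starProd p (e i) (e j)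

lemma tendsto_pow_smul_starMatrix {s n : ℕ} {e : Fin n → List Bool}
    (he : Function.Injective e) (hpat : ∀ i, IsPattern s (e i)) :
    Tendsto (fun p : ℝ => p ^ s • starMatrix p e) (𝓝[>] 0) (𝓝 1) := by
  refine tendsto_pi_nhds.2 fun i => tendsto_pi_nhds.2 fun j => ?_
  simpa [starMatrix, Matrix.one_apply, he.eq_iff] using
    tendsto_pow_mul_starProd (hpat i) (hpat j)

def bordered {R : Type*} [Zero R] [One R] [Neg R] {n : ℕ} (M : Matrix (Fin n) (Fin n) R) :
    Matrix (Fin (n + 1)) (Fin (n + 1)) R :=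
  Matrix.of fun i j =>
    if hi : i = 0 then (if j = 0 then 0 else 1)
    else if hj : j = 0 then -1
    else M (i.pred hi) (j.pred hj)

section bordered

variable {R : Type*} {n : ℕ}

section simp

variable [Zero R] [One R] [Neg R] (M : Matrix (Fin n) (Fin n) R) (i j : Fin n)

@[simp] lemma bordered_zero_zero : bordered M 0 0 = 0 := rfl

@[simp] lemma bordered_zero_succ : bordered M 0 j.succ = 1 := by simp [bordered]

@[simp] lemma bordered_succ_zero : bordered M i.succ 0 = -1 := by simp [bordered]

@[simp] lemma bordered_succ_succ : bordered M i.succ j.succ = M i j := by simp [bordered]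

end simp

lemma continuous_bordered [Zero R] [One R] [Neg R] [TopologicalSpace R] :
    Continuous (bordered : Matrix (Fin n) (Fin n) R → _) := by
  refine continuous_matrix fun i j => ?_
  simp only [bordered, Matrix.of_apply]
  split_ifs
  · exact continuous_const
  · exact continuous_const
  · exact continuous_const
  · exact (continuous_apply _).comp (continuous_apply _)

-- Scaling the first row by `c` turns `bordered (c • M)` into `bordered M` with its last `n`
-- columns scaled by `c`.
lemma det_bordered_smul_mul [CommRing R] (c : R) (M : Matrix (Fin n) (Fin n) R) :
    c * (bordered (c • M)).det = c ^ n * (bordered M).det := by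
  have h : (bordered (c • M)).updateRow 0 (c • bordered (c • M) 0) =
      bordered M * Matrix.diagonal (Fin.cons 1 fun _ => c) := by
    ext i j
    rw [Matrix.mul_diagonal]
    cases i using Fin.cases <;> cases j using Fin.cases <;> simp [mul_comm]
  have hd := congrArg Matrix.det h
  rw [Matrix.det_updateRow_smul, Matrix.updateRow_eq_self, Matrix.det_mul,
    Matrix.det_diagonal, Fin.prod_univ_succ] at hd
  simpa [mul_comm] using hd

lemma det_bordered_smul [Field R] {c : R} (hc : c ≠ 0) (M : Matrix (Fin n) (Fin n) R) :
    (bordered (c • M)).det = c ^ (n - 1) * (bordered M).det := by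
  cases n with
  | zero => simp [Matrix.det_unique, bordered]
  | succ n =>
    apply mul_left_cancel₀ hc
    rw [det_bordered_smul_mul, ← mul_assoc, ← pow_succ', Nat.add_sub_cancel]

-- Adding all other columns to the first one leaves `(n, 0, …, 0)ᵀ` there.
lemma det_bordered_one [CommRing R] : (bordered (1 : Matrix (Fin n) (Fin n) R)).det = n := by
  set L' := (bordered (1 : Matrix (Fin n) (Fin n) R)).updateCol 0
    fun k => ∑ j, (fun _ => (1 : R)) j • bordered 1 k j
  have hcol : ∀ i, L' i 0 = if i = 0 then (n : R) else 0 := by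
    intro i
    cases i using Fin.cases <;> simp [L', Fin.sum_univ_succ, Matrix.one_apply]
  have hsub : L'.submatrix Fin.succ Fin.succ = 1 := by
    ext i j
    simp [L', Matrix.one_apply]
  have hdet : (bordered (1 : Matrix (Fin n) (Fin n) R)).det = L'.det := by
    rw [Matrix.det_updateCol_sum, one_smul]
  rw [hdet, Matrix.det_succ_column_zero, Fin.sum_univ_succ]
  simp [hcol, hsub]

end bordered

lemma tendsto_div_mul_pow {a b : ℝ → ℝ} {s N : ℕ} (hN : N ≠ 0)
    (ha : Tendsto (fun p => a p * p ^ (s * (N - 1))) (𝓝[>] 0) (𝓝 N))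
    (hb : Tendsto (fun p => b p * p ^ (s * N)) (𝓝[>] 0) (𝓝 1)) :
    Tendsto (fun p => b p / a p * (N * p ^ s)) (𝓝[>] 0) (𝓝 1) := by
  have hN' : (N : ℝ) ≠ 0 := Nat.cast_ne_zero.2 hN
  have h := (tendsto_const_nhds (x := (N : ℝ))).mul hb |>.div ha hN'
  rw [mul_one, div_self hN'] at h
  refine h.congr' ?_
  filter_upwards [self_mem_nhdsWithin] with p (hp : 0 < p)
  have hq : p ^ (s * (N - 1)) ≠ 0 := pow_ne_zero _ hp.ne'
  have hpow : p ^ (s * N) = p ^ s * p ^ (s * (N - 1)) := by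
    rw [← pow_add, Nat.mul_sub_one, Nat.add_sub_cancel' (Nat.le_mul_of_pos_right s
      (Nat.pos_of_ne_zero hN))]
  rw [Pi.div_apply, hpow, ← mul_assoc, ← mul_assoc, mul_div_mul_right _ _ hq]
  ring

theorem stmt_18_general (w s : ℕ) (hsw : s ≤ w)
    (N : ℕ) (hN : N = (w - 1).choose (s - 1))
    (e : Fin N → List Bool) (he : Function.Injective e)
    (hrange : ∀ x : List Bool, x ∈ Set.range e ↔
      (x.length ≤ w ∧ x.head? = some true ∧ x.getLast? = some true ∧ x.count true = s))
    (A : ℝ → Matrix (Fin (N + 1)) (Fin (N + 1)) ℝ)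
    (hA : ∀ p, A p = Matrix.of fun i j =>
      if hi : i = 0 then (if j = 0 then 0 else 1)
      else if hj : j = 0 then -1
      else starProd p (e (i.pred hi)) (e (j.pred hj)))
    (B : ℝ → Matrix (Fin N) (Fin N) ℝ)
    (hB : ∀ p, B p = Matrix.of fun i j => starProd p (e i) (e j))
    (E : ℝ → ℝ)
    (hE : ∀ p ∈ Set.Ioo (0 : ℝ) 1, E p = (B p).det / (A p).det) :
    Tendsto (fun p : ℝ => (A p).det * p ^ (s * (N - 1))) (𝓝[>] 0) (𝓝 (N : ℝ))
    ∧ Tendsto (fun p : ℝ => (B p).det * p ^ (s * N)) (𝓝[>] 0) (𝓝 1)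
    ∧ Tendsto (fun p : ℝ => E p * ((N : ℝ) * p ^ s)) (𝓝[>] 0) (𝓝 1) := by
  have hN0 : N ≠ 0 := hN ▸ (Nat.choose_pos (by omega)).ne'
  have hpat : ∀ i, IsPattern s (e i) := fun i =>
    have ⟨_, head, getLast, count⟩ := (hrange (e i)).1 ⟨i, rfl⟩
    ⟨head, getLast, count⟩
  have hB' : ∀ p, B p = starMatrix p e := hB
  have hA' : ∀ p, A p = bordered (starMatrix p e) := hA
  have hlim := tendsto_pow_smul_starMatrix he hpat
  have hdetB : Tendsto (fun p : ℝ => (B p).det * p ^ (s * N)) (𝓝[>] 0) (𝓝 1) := by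
    have h := (continuous_id.matrix_det.tendsto 1).comp hlim
    rw [Function.comp_def, id, Matrix.det_one] at h
    refine h.congr fun p => ?_
    simp [hB', pow_mul, mul_comm]
  have hdetA : Tendsto (fun p : ℝ => (A p).det * p ^ (s * (N - 1))) (𝓝[>] 0) (𝓝 N) := by
    have h := (continuous_bordered.matrix_det.tendsto 1).comp hlim
    rw [Function.comp_def, det_bordered_one] at h
    refine h.congr' ?_
    filter_upwards [self_mem_nhdsWithin] with p (hp : 0 < p)
    simp [hA', det_bordered_smul (pow_ne_zero s hp.ne'), pow_mul, mul_comm]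
  refine ⟨hdetA, hdetB, (tendsto_div_mul_pow hN0 hdetA hdetB).congr' ?_⟩
  filter_upwards [Ioo_mem_nhdsGT one_pos] with p hp
  rw [hE p hp]

/-- Asymptotics, as `p → 0⁺`, of the determinants of the martingale-method linear
system: with `N = C(w-1, s-1)`, an enumeration `e` of the ending patterns `Ω(w,s)`,
the bordered matrix `A p` (top-left `0`, top row `1`s, first column `-1`s, and star
products in the lower-right block) and the `N × N` star-product matrix `B p`, one has
`det (A p) ~ N p^{-s(N-1)}`, `det (B p) ~ p^{-sN}`; consequently, the expected
waiting time `E p = det (B p) / det (A p)` satisfies `E p ~ 1/(N p^s)`. -/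
theorem stmt_18 (w s : ℕ) (hs : 1 ≤ s) (hsw : s ≤ w)
    (N : ℕ) (hN : N = (w - 1).choose (s - 1))
    (e : Fin N → List Bool) (he : Function.Injective e)
    (hrange : ∀ x : List Bool, x ∈ Set.range e ↔
      (x.length ≤ w ∧ x.head? = some true ∧ x.getLast? = some true ∧ x.count true = s))
    (A : ℝ → Matrix (Fin (N + 1)) (Fin (N + 1)) ℝ)
    (hA : ∀ p, A p = Matrix.of fun i j =>
      if hi : i = 0 then (if j = 0 then 0 else 1)
      else if hj : j = 0 then -1
      else starProd p (e (i.pred hi)) (e (j.pred hj)))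
    (B : ℝ → Matrix (Fin N) (Fin N) ℝ)
    (hB : ∀ p, B p = Matrix.of fun i j => starProd p (e i) (e j))
    (E : ℝ → ℝ)
    (hE : ∀ p ∈ Set.Ioo (0 : ℝ) 1, E p = (B p).det / (A p).det) :
    Tendsto (fun p : ℝ => (A p).det * p ^ (s * (N - 1))) (𝓝[>] 0) (𝓝 (N : ℝ))
    ∧ Tendsto (fun p : ℝ => (B p).det * p ^ (s * N)) (𝓝[>] 0) (𝓝 1)
    ∧ Tendsto (fun p : ℝ => E p * ((N : ℝ) * p ^ s)) (𝓝[>] 0) (𝓝 1) :=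
  stmt_18_general w s hsw N hN e he hrange A hA B hB E hE
end
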